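/- arXiv:1004.1614 — 6 statements merged into one kernel-verified Lean document; each statement's English description precedes it below -/
import Mathlib

section
/- Let O be a monotonic operator, I a finite input with r ∈ O(I), and M ⊆ I a MISet of r. If for all m ∈ M we have r ∉ O(I \ {m}), then M is the unique MISet of r contained in I. -/
theorem stmt1 {R : Type*} [DecidableEq R] (O : Finset R → Finset R)
    (hmono : ∀ I₁ I₂ : Finset R, I₁ ⊆ I₂ → O I₁ ⊆ O I₂)
    (I : Finset R) (r : R) (hr : r ∈ O I)
    (M : Finset R) (hMI : M ⊆ I) (hM : r ∈ O M ∧ ∀ M' ⊂ M, r ∉ O M')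
    (htest : ∀ m ∈ M, r ∉ O (I \ {m})) :
    ∀ M' ⊆ I, (r ∈ O M' ∧ ∀ M'' ⊂ M', r ∉ O M'') → M' = M := by
  intro M' hM'I ⟨hrM', hmin'⟩
  have hMM' : M ⊆ M' := by
    intro m hmM
    by_contra hmn
    have hsub : M' ⊆ I \ {m} := by
      intro x hx
      simp only [Finset.mem_sdiff, Finset.mem_singleton]
      exact ⟨hM'I hx, fun h => hmn (h ▸ hx)⟩
    exact htest m hmM (hmono _ _ hsub hrM')
  rcases eq_or_ne M' M with h | h
  · exact h
  · exact absurd hM.1 (hmin' M ⟨hMM', fun hc => h (Finset.Subset.antisymm hc hMM')⟩)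
end

section
/- Let O be a monotonic operator, I a finite input, r ∈ O(I), and p MISets M₁, …, M_p of r in I. Any MISet M' of r in I distinct from all of M₁, …, M_p satisfies: there exists a tuple (m₁, …, m_p) with m_i ∈ M_i for each i, such that M' ⊆ I \ {m₁, …, m_p}. -/
theorem stmt4 {R : Type*} [DecidableEq R] (O : Finset R → Finset R)
    (hmono : ∀ I₁ I₂ : Finset R, I₁ ⊆ I₂ → O I₁ ⊆ O I₂)
    (I : Finset R) (r : R) (hr : r ∈ O I)
    (p : ℕ) (Ms : Fin p → Finset R)
    (hMs : ∀ i, Ms i ⊆ I ∧ r ∈ O (Ms i) ∧ ∀ N ⊂ Ms i, r ∉ O N)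
    (M' : Finset R) (hM'I : M' ⊆ I)
    (hM' : r ∈ O M' ∧ ∀ N ⊂ M', r ∉ O N)
    (hne : ∀ i, M' ≠ Ms i) :
    ∃ m : Fin p → R, (∀ i, m i ∈ Ms i) ∧ M' ⊆ I \ (Finset.univ.image m) := by
  have key : ∀ i, ∃ x, x ∈ Ms i ∧ x ∉ M' := by
    intro i
    rw [← Finset.not_subset]
    intro hsub
    have hss : Ms i ⊂ M' := lt_of_le_of_ne hsub (fun h => hne i h.symm)
    exact hM'.2 (Ms i) hss (hMs i).2.1
  choose m hm1 hm2 using key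
  refine ⟨m, hm1, fun x hx => Finset.mem_sdiff.mpr ⟨hM'I hx, ?_⟩⟩
  intro hximg
  obtain ⟨i, -, rfl⟩ := Finset.mem_image.mp hximg
  exact hm2 i hx
end

section
/- Let O be a monotonic operator, I a finite input, and r ∈ O(I). An element i ∈ I belongs to every MISet of r (contained in I) if and only if r ∉ O(I \ {i}). -/
private lemma exists_minimal_subset {R : Type*} [DecidableEq R] (O : Finset R → Finset R)
    (r : R) (S : Finset R) (h : r ∈ O S) :
    ∃ M ⊆ S, r ∈ O M ∧ ∀ M' ⊂ M, r ∉ O M' := by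
  induction S using Finset.strongInduction with
  | _ S ih =>
    by_cases hmin : ∀ M' ⊂ S, r ∉ O M'
    · exact ⟨S, le_refl _, h, hmin⟩
    · push_neg at hmin
      obtain ⟨M', hM'S, hrM'⟩ := hmin
      obtain ⟨M, hMs, hM⟩ := ih M' hM'S hrM'
      exact ⟨M, hMs.trans hM'S.subset, hM⟩

theorem stmt5 {R : Type*} [DecidableEq R] (O : Finset R → Finset R)
    (hmono : ∀ I₁ I₂ : Finset R, I₁ ⊆ I₂ → O I₁ ⊆ O I₂)
    (I : Finset R) (r : R) (hr : r ∈ O I) (i : R) (hi : i ∈ I) :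
    (∀ M ⊆ I, (r ∈ O M ∧ ∀ M' ⊂ M, r ∉ O M') → i ∈ M) ↔ r ∉ O (I \ {i}) := by
  constructor
  · intro h hcon
    obtain ⟨M, hMs, hrM, hmin⟩ := exists_minimal_subset O r (I \ {i}) hcon
    have : i ∈ M := h M (hMs.trans (Finset.sdiff_subset)) ⟨hrM, hmin⟩
    exact (Finset.mem_sdiff.mp (hMs this)).2 (Finset.mem_singleton_self i)
  · intro h M hMI ⟨hrM, _⟩
    by_contra hiM
    exact h (hmono M (I \ {i}) (fun x hx => Finset.mem_sdiff.mpr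
      ⟨hMI hx, fun hxi => hiM ((Finset.mem_singleton.mp hxi) ▸ hx)⟩) hrM)
end

section
/- The greedy removal algorithm is correct: let O be a monotonic operator, I a finite input with r ∈ O(I). Process the elements of I in any fixed order, maintaining a set M initialized to I; for each element m, if r ∈ O(M \ {m}), replace M by M \ {m}. The resulting set M is a MISet of r, i.e., r ∈ O(M) and for every m ∈ M, r ∉ O(M \ {m}) — which together with monotonicity implies r ∉ O(M') for every proper subset M' ⊊ M. -/
section aux
variable {R : Type*} [DecidableEq R] (O : Finset R → Finset R) (r : R)

private lemma foldl_subset (L : List R) (M : Finset R) :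
    L.foldl (fun M m => if r ∈ O (M.erase m) then M.erase m else M) M ⊆ M := by
  induction L generalizing M with
  | nil => simp
  | cons a t ih =>
    simp only [List.foldl_cons]
    refine (ih _).trans ?_
    split <;> [exact Finset.erase_subset _ _; rfl]

private lemma foldl_mem (L : List R) (M : Finset R) (h : r ∈ O M) :
    r ∈ O (L.foldl (fun M m => if r ∈ O (M.erase m) then M.erase m else M) M) := by
  induction L generalizing M with
  | nil => simpa
  | cons a t ih =>
    simp only [List.foldl_cons]
    split <;> [exact ih _ ‹_›; exact ih _ h]

private lemma foldl_min (hmono : ∀ I₁ I₂ : Finset R, I₁ ⊆ I₂ → O I₁ ⊆ O I₂)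
    (L : List R) (M : Finset R) :
    ∀ m ∈ L, m ∈ L.foldl (fun M m => if r ∈ O (M.erase m) then M.erase m else M) M →
      r ∉ O ((L.foldl (fun M m => if r ∈ O (M.erase m) then M.erase m else M) M).erase m) := by
  induction L generalizing M with
  | nil => simp
  | cons a t ih =>
    intro m hm hmem hcontra
    simp only [List.foldl_cons] at hmem hcontra
    rcases List.mem_cons.mp hm with rfl | hm
    · by_cases hc : r ∈ O (M.erase m)
      · rw [if_pos hc] at hmem
        exact (Finset.notMem_erase m M) (foldl_subset O r t _ hmem)
      · rw [if_neg hc] at hmem hcontra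
        exact hc (hmono _ _ (Finset.erase_subset_erase m (foldl_subset O r t M)) hcontra)
    · exact ih _ m hm hmem hcontra

end aux

theorem stmt7 {R : Type*} [DecidableEq R] (O : Finset R → Finset R)
    (hmono : ∀ I₁ I₂ : Finset R, I₁ ⊆ I₂ → O I₁ ⊆ O I₂)
    (I : Finset R) (r : R) (hr : r ∈ O I)
    (L : List R) (hL : L.toFinset = I)
    (M : Finset R)
    (hM : M = L.foldl (fun M m => if r ∈ O (M.erase m) then M.erase m else M) I) :
    r ∈ O M ∧ (∀ m ∈ M, r ∉ O (M.erase m)) ∧ ∀ M' ⊂ M, r ∉ O M' := by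
  subst hM
  have h1 := foldl_mem O r L I hr
  have h2 : ∀ m ∈ L.foldl (fun M m => if r ∈ O (M.erase m) then M.erase m else M) I,
      r ∉ O ((L.foldl (fun M m => if r ∈ O (M.erase m) then M.erase m else M) I).erase m) := by
    intro m hm
    have hmL : m ∈ L := by
      rw [← hL] at *
      exact List.mem_toFinset.mp (foldl_subset O r L _ hm)
    exact foldl_min O r hmono L I m hmL hm
  refine ⟨h1, h2, ?_⟩
  intro M' hM' hcontra
  obtain ⟨m, hmM, hmM'⟩ := Finset.exists_of_ssubset hM'
  exact h2 m hmM (hmono _ _ (fun x hx => Finset.mem_erase.mpr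
    ⟨by rintro rfl; exact hmM' hx, hM'.subset hx⟩) hcontra)
end

section
/- For a monotonic operator O with finite input I, the collection of all MISets of every r ∈ O(I) determines O on all subsets of I: for any I_s ⊆ I and any r ∈ O(I), we have r ∈ O(I_s) if and only if there exists a MISet M of r in I with M ⊆ I_s. -/
lemma exists_min_aux {R : Type*} [DecidableEq R] (O : Finset R → Finset R) (r : R) :
    ∀ S : Finset R, r ∈ O S → ∃ M ⊆ S, r ∈ O M ∧ ∀ M' ⊂ M, r ∉ O M' := by
  intro S
  induction S using Finset.strongInduction with
  | _ S ih =>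
    intro hrS
    by_cases h : ∀ M' ⊂ S, r ∉ O M'
    · exact ⟨S, le_refl S, hrS, h⟩
    · push_neg at h
      obtain ⟨M', hM'S, hrM'⟩ := h
      obtain ⟨M, hMS, hrM, hmin⟩ := ih M' hM'S hrM'
      exact ⟨M, hMS.trans hM'S.subset, hrM, hmin⟩

theorem stmt12 {R : Type*} [DecidableEq R] (O : Finset R → Finset R)
    (hmono : ∀ I₁ I₂ : Finset R, I₁ ⊆ I₂ → O I₁ ⊆ O I₂)
    (I : Finset R) (r : R) (hr : r ∈ O I)
    (Is : Finset R) (hIs : Is ⊆ I) :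
    r ∈ O Is ↔ ∃ M ⊆ I, M ⊆ Is ∧ r ∈ O M ∧ ∀ M' ⊂ M, r ∉ O M' := by
  constructor
  · intro hrIs
    obtain ⟨M, hMIs, hrM, hmin⟩ := exists_min_aux O r Is hrIs
    exact ⟨M, hMIs.trans hIs, hMIs, hrM, hmin⟩
  · rintro ⟨M, _, hMIs, hrM, _⟩
    exact hmono M Is hMIs hrM
end

section
/- Composition theorem for all-provenance: let O₁, O₂ be monotonic operators, I₁ a finite input, R₁ = O₁(I₁), R₂ = O₂(R₁), and r₂ ∈ R₂. For any I_s ⊆ I₁, r₂ ∈ (O₂ ∘ O₁)(I_s) if and only if there exists a MISet M₂ of r₂ (with respect to O₂ and input R₁) such that M₂ ⊆ O_s, where O_s = { r₁ ∈ R₁ : there exists a MISet M of r₁ (w.r.t. O₁ and input I₁) with M ⊆ I_s }. -/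
lemma exists_miset {R : Type*} [DecidableEq R] (O : Finset R → Finset R)
    (I : Finset R) (r : R) (h : r ∈ O I) :
    ∃ M ⊆ I, r ∈ O M ∧ ∀ N ⊂ M, r ∉ O N := by
  classical
  have hne : (I.powerset.filter (fun M => r ∈ O M)).Nonempty :=
    ⟨I, by simp [h]⟩
  obtain ⟨M, hM, hmin⟩ := Finset.exists_min_image _ (fun M => M.card) hne
  simp only [Finset.mem_filter, Finset.mem_powerset] at hM
  refine ⟨M, hM.1, hM.2, fun N hN hrN => ?_⟩
  have := hmin N (by simp [Finset.mem_filter, Finset.mem_powerset,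
    hN.subset.trans hM.1, hrN])
  exact absurd (Finset.card_lt_card hN) (not_lt.mpr this)

theorem stmt13 {R : Type*} [DecidableEq R] (O₁ O₂ : Finset R → Finset R)
    (hmono₁ : ∀ I₁ I₂ : Finset R, I₁ ⊆ I₂ → O₁ I₁ ⊆ O₁ I₂)
    (hmono₂ : ∀ I₁ I₂ : Finset R, I₁ ⊆ I₂ → O₂ I₁ ⊆ O₂ I₂)
    (I₁ : Finset R) (r₂ : R) (hr₂ : r₂ ∈ O₂ (O₁ I₁))
    (Is : Finset R) (hIs : Is ⊆ I₁) :
    r₂ ∈ O₂ (O₁ Is) ↔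
      ∃ M₂ ⊆ O₁ I₁, (r₂ ∈ O₂ M₂ ∧ ∀ N ⊂ M₂, r₂ ∉ O₂ N) ∧
        ∀ r₁ ∈ M₂, ∃ M ⊆ I₁, M ⊆ Is ∧ (r₁ ∈ O₁ M ∧ ∀ N ⊂ M, r₁ ∉ O₁ N) := by
  constructor
  · intro h
    obtain ⟨M₂, hM₂sub, hrM₂, hmin⟩ := exists_miset O₂ (O₁ Is) r₂ h
    refine ⟨M₂, hM₂sub.trans (hmono₁ _ _ hIs), ⟨hrM₂, hmin⟩, fun r₁ hr₁ => ?_⟩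
    obtain ⟨M, hMsub, hrM, hminM⟩ := exists_miset O₁ Is r₁ (hM₂sub hr₁)
    exact ⟨M, hMsub.trans hIs, hMsub, hrM, hminM⟩
  · rintro ⟨M₂, hM₂sub, ⟨hrM₂, -⟩, hall⟩
    have : M₂ ⊆ O₁ Is := fun r₁ hr₁ => by
      obtain ⟨M, -, hMIs, hrM, -⟩ := hall r₁ hr₁
      exact hmono₁ _ _ hMIs hrM
    exact hmono₂ _ _ this hrM₂
end
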